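/- Let d ≥ 2, fix x′ ∈ ℝ^d, m² ∈ ℝ, N ∈ ℕ, and let v_0, …, v_N be smooth real functions on an open set U ⊆ ℝ^d. Then for every x ∈ U with σ(x,x′) > 0: (□ + m²)( Σ_{j=0}^{N} v_j·σ^j·ln σ ) = [ 2·σ^μ∂_μv_0 + (d−2)·v_0 ]·σ^{−1} + Σ_{j=0}^{N−1} [ (□+m²)v_j + 2(j+1)·σ^μ∂_μv_{j+1} + (j+1)(d+2j)·v_{j+1} ]·σ^j·ln σ + ((□+m²)v_N)·σ^N·ln σ + Σ_{j=1}^{N} [ 2·σ^μ∂_μv_j + (4j+d−2)·v_j ]·σ^{j−1}, all derivatives in x. (This yields the Hadamard recursion relations for the V-coefficients.) -/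

import Mathlib

noncomputable section

/-- The coordinate space ℝ^d = ℝ_t × ℝ^{d-2} × ℝ_z with d = n + 2. -/
abbrev Pt (n : ℕ) := ℝ × (Fin n → ℝ) × ℝ

/-- Partial derivative in the time coordinate `t`. -/
noncomputable def pdt {n : ℕ} (f : Pt n → ℝ) (x : Pt n) : ℝ :=
  deriv (fun s => f (s, x.2.1, x.2.2)) x.1

/-- Partial derivative in the transverse coordinate `x_i`. -/
noncomputable def pdx {n : ℕ} (i : Fin n) (f : Pt n → ℝ) (x : Pt n) : ℝ :=
  deriv (fun s => f (x.1, Function.update x.2.1 i s, x.2.2)) (x.2.1 i)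

/-- Partial derivative in the normal coordinate `z`. -/
noncomputable def pdz {n : ℕ} (f : Pt n → ℝ) (x : Pt n) : ℝ :=
  deriv (fun s => f (x.1, x.2.1, s)) x.2.2

/-- The d'Alembert operator □ = ∂_t² − Σ_i ∂_{x_i}² − ∂_z² (signature (+,−,…,−)). -/
noncomputable def box {n : ℕ} (f : Pt n → ℝ) (x : Pt n) : ℝ :=
  pdt (pdt f) x - (∑ i : Fin n, pdx i (pdx i f) x) - pdz (pdz f) x

/-- The Minkowskian contraction of gradients:
    f^μ∂_μ g = ∂_t f ∂_t g − Σ_i ∂_{x_i} f ∂_{x_i} g − ∂_z f ∂_z g. -/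
noncomputable def contr {n : ℕ} (f g : Pt n → ℝ) (x : Pt n) : ℝ :=
  pdt f x * pdt g x - (∑ i : Fin n, pdx i f x * pdx i g x) - pdz f x * pdz g x

/-- The Synge world function σ(x,x′), as a function of x for fixed x′. -/
noncomputable def synge {n : ℕ} (x' : Pt n) (x : Pt n) : ℝ :=
  (1/2) * ((x.1 - x'.1)^2 - (∑ i : Fin n, (x.2.1 i - x'.2.1 i)^2) - (x.2.2 - x'.2.2)^2)

/-- The reflected Synge world function σ₋(x,x′), as a function of x for fixed x′. -/
noncomputable def syngeR {n : ℕ} (x' : Pt n) (x : Pt n) : ℝ :=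
  (1/2) * ((x.1 - x'.1)^2 - (∑ i : Fin n, (x.2.1 i - x'.2.1 i)^2) - (x.2.2 + x'.2.2)^2)

open Finset

section Aux

lemma pdx_pdx {n : ℕ} (i : Fin n) (f : Pt n → ℝ) (x : Pt n) :
    pdx i (pdx i f) x
      = deriv (deriv (fun u => f (x.1, Function.update x.2.1 i u, x.2.2))) (x.2.1 i) := by
  unfold pdx
  congr 1
  funext s
  simp only [Function.update_idem, Function.update_self]

lemma hq_t {n : ℕ} (x' : Pt n) (b : Fin n → ℝ) (c : ℝ) (u : ℝ) :
    HasDerivAt (fun t => synge x' (t, b, c)) (u - x'.1) u := by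
  have h : HasDerivAt (fun t : ℝ => (1/2 : ℝ) *
      ((t - x'.1)^2 - (∑ i, (b i - x'.2.1 i)^2) - (c - x'.2.2)^2))
      ((1/2 : ℝ) * ((2:ℕ) * (u - x'.1)^(2-1) * 1)) u :=
    (((((hasDerivAt_id u).sub_const x'.1).pow 2).sub_const _).sub_const _).const_mul _
  have hfun : (fun t => synge x' (t, b, c)) = fun t : ℝ => (1/2 : ℝ) *
      ((t - x'.1)^2 - (∑ i, (b i - x'.2.1 i)^2) - (c - x'.2.2)^2) := rfl
  rw [hfun]
  convert h using 1
  push_cast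
  ring

lemma hq_z {n : ℕ} (x' : Pt n) (a : ℝ) (b : Fin n → ℝ) (u : ℝ) :
    HasDerivAt (fun t => synge x' (a, b, t)) (-(u - x'.2.2)) u := by
  have h : HasDerivAt (fun t : ℝ => (1/2 : ℝ) *
      (((a - x'.1)^2 - (∑ i, (b i - x'.2.1 i)^2)) - (t - x'.2.2)^2))
      ((1/2 : ℝ) * (-((2:ℕ) * (u - x'.2.2)^(2-1) * 1))) u :=
    ((((hasDerivAt_id u).sub_const x'.2.2).pow 2).const_sub _).const_mul _
  have hfun : (fun t => synge x' (a, b, t)) = fun t : ℝ => (1/2 : ℝ) *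
      (((a - x'.1)^2 - (∑ i, (b i - x'.2.1 i)^2)) - (t - x'.2.2)^2) := rfl
  rw [hfun]
  convert h using 1
  push_cast
  ring

lemma hq_x {n : ℕ} (x' : Pt n) (a : ℝ) (b : Fin n → ℝ) (c : ℝ) (i : Fin n) (u : ℝ) :
    HasDerivAt (fun t => synge x' (a, Function.update b i t, c)) (-(u - x'.2.1 i)) u := by
  have hfun : (fun t => synge x' (a, Function.update b i t, c))
      = fun t : ℝ => (1/2 : ℝ) * ((a - x'.1)^2 -
          ((t - x'.2.1 i)^2 + ∑ k ∈ Finset.univ \ {i}, (b k - x'.2.1 k)^2)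
          - (c - x'.2.2)^2) := by
    funext t
    simp only [synge]
    have hsum : (∑ k, (Function.update b i t k - x'.2.1 k)^2)
        = (t - x'.2.1 i)^2 + ∑ k ∈ Finset.univ \ {i}, (b k - x'.2.1 k)^2 := by
      rw [← Finset.sum_update_of_mem (Finset.mem_univ i) (fun k => (b k - x'.2.1 k)^2)
        ((t - x'.2.1 i)^2)]
      apply Finset.sum_congr rfl
      intro k _
      rcases eq_or_ne k i with h | h
      · subst h; simp
      · simp [Function.update_of_ne h]
    rw [hsum]
  rw [hfun]
  have h : HasDerivAt (fun t : ℝ => (1/2 : ℝ) * ((a - x'.1)^2 -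
      ((t - x'.2.1 i)^2 + ∑ k ∈ Finset.univ \ {i}, (b k - x'.2.1 k)^2)
      - (c - x'.2.2)^2))
      ((1/2 : ℝ) * (-((2:ℕ) * (u - x'.2.1 i)^(2-1) * 1))) u :=
    (((((((hasDerivAt_id u).sub_const (x'.2.1 i)).pow 2)).add_const _).const_sub _).sub_const _).const_mul _
  convert h using 1
  push_cast
  ring

lemma pdt_synge {n : ℕ} (x' x : Pt n) : pdt (synge x') x = x.1 - x'.1 :=
  (hq_t x' x.2.1 x.2.2 x.1).deriv

lemma pdx_synge {n : ℕ} (x' : Pt n) (i : Fin n) (x : Pt n) :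
    pdx i (synge x') x = -(x.2.1 i - x'.2.1 i) :=
  (hq_x x' x.1 x.2.1 x.2.2 i (x.2.1 i)).deriv

lemma pdz_synge {n : ℕ} (x' x : Pt n) : pdz (synge x') x = -(x.2.2 - x'.2.2) :=
  (hq_z x' x.1 x.2.1 x.2.2).deriv

lemma cont_synge {n : ℕ} (x' : Pt n) : Continuous (synge x') := by
  unfold synge; fun_prop

lemma contDiff_slice_t {n : ℕ} (b : Fin n → ℝ) (c : ℝ) :
    ContDiff ℝ (⊤ : ℕ∞) (fun u : ℝ => ((u, b, c) : Pt n)) :=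
  contDiff_id.prodMk contDiff_const

lemma contDiff_slice_z {n : ℕ} (a : ℝ) (b : Fin n → ℝ) :
    ContDiff ℝ (⊤ : ℕ∞) (fun u : ℝ => ((a, b, u) : Pt n)) :=
  contDiff_const.prodMk (contDiff_const.prodMk contDiff_id)

lemma contDiff_slice_x {n : ℕ} (a : ℝ) (b : Fin n → ℝ) (c : ℝ) (i : Fin n) :
    ContDiff ℝ (⊤ : ℕ∞) (fun u : ℝ => ((a, Function.update b i u, c) : Pt n)) := by
  refine contDiff_const.prodMk (ContDiff.prodMk ?_ contDiff_const)
  have : Function.update b i = fun u => (fun k => if k = i then u else b k) := by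
    funext u k
    rw [Function.update_apply]
  rw [this]
  refine contDiff_pi.2 fun k => ?_
  by_cases h : k = i
  · simp only [h, if_true]; exact contDiff_id
  · simp only [h, if_false]; exact contDiff_const
noncomputable def K1 (s L : ℝ) (j : ℕ) : ℝ := s ^ j * L
noncomputable def K2 (s L : ℝ) (j : ℕ) : ℝ := 2 * s ^ j * ((j:ℝ) * L + 1) / s
noncomputable def K3 (s L : ℝ) (j : ℕ) : ℝ :=
  s ^ j * ((j:ℝ) + ((j:ℝ) * L + 1) * ((j:ℝ) - 1)) / s ^ 2
noncomputable def K4 (s L : ℝ) (j : ℕ) : ℝ := s ^ j * ((j:ℝ) * L + 1) / s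

lemma master {O : Set ℝ} (hO : IsOpen O) {a : ℝ} (ha : a ∈ O) (N : ℕ)
    (w : ℕ → ℝ → ℝ) (hw : ∀ j ∈ Finset.range (N+1), ContDiffOn ℝ (⊤ : ℕ∞) (w j) O)
    (q q1 : ℝ → ℝ) (c2 : ℝ)
    (hq : ∀ u, HasDerivAt q (q1 u) u)
    (hq1 : HasDerivAt q1 c2 a)
    (hpos : ∀ u ∈ O, 0 < q u) :
    deriv (deriv (fun u => ∑ j ∈ Finset.range (N+1), w j u * q u ^ j * Real.log (q u))) a
      = ∑ j ∈ Finset.range (N+1),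
          (K1 (q a) (Real.log (q a)) j * deriv (deriv (w j)) a
           + K2 (q a) (Real.log (q a)) j * (deriv (w j) a * q1 a)
           + w j a * (K3 (q a) (Real.log (q a)) j * (q1 a)^2
                      + K4 (q a) (Real.log (q a)) j * c2)) := by
  have hdo : ∀ j ∈ Finset.range (N+1), ∀ u ∈ O, HasDerivAt (w j) (deriv (w j) u) u := by
    intro j hj u hu
    exact (((hw j hj).differentiableOn (by simp)).differentiableAt (hO.mem_nhds hu)).hasDerivAt
  have hd2 : ∀ j ∈ Finset.range (N+1), HasDerivAt (deriv (w j)) (deriv (deriv (w j)) a) a := by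
    intro j hj
    have h1 : ContDiffOn ℝ 1 (deriv (w j)) O := (hw j hj).deriv_of_isOpen hO (WithTop.coe_le_coe.mpr le_top)
    exact ((h1.differentiableOn one_ne_zero).differentiableAt (hO.mem_nhds ha)).hasDerivAt
  have hlog : ∀ u ∈ O, HasDerivAt (fun t => Real.log (q t)) ((q u)⁻¹ * q1 u) u := fun u hu =>
    (Real.hasDerivAt_log (hpos u hu).ne').comp u (hq u)
  have hpow : ∀ (j : ℕ), ∀ u ∈ O,
      HasDerivAt (fun t => q t ^ j) (q u ^ j * ((j:ℝ) * ((q u)⁻¹ * q1 u))) u := by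
    intro j u hu
    have hE : HasDerivAt (fun t => Real.exp ((j:ℝ) * Real.log (q t)))
        (Real.exp ((j:ℝ) * Real.log (q u)) * ((j:ℝ) * ((q u)⁻¹ * q1 u))) u :=
      (Real.hasDerivAt_exp _).comp u ((hlog u hu).const_mul (j:ℝ))
    have hEq : (fun t => q t ^ j) =ᶠ[nhds u] fun t => Real.exp ((j:ℝ) * Real.log (q t)) := by
      filter_upwards [hO.mem_nhds hu] with t ht
      rw [Real.exp_nat_mul, Real.exp_log (hpos t ht)]
    have h2 := hE.congr_of_eventuallyEq hEq
    rwa [Real.exp_nat_mul, Real.exp_log (hpos u hu)] at h2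
  have hD1 : ∀ j ∈ Finset.range (N+1), ∀ u ∈ O,
      HasDerivAt (fun t => w j t * q t ^ j * Real.log (q t))
        ((deriv (w j) u * q u ^ j + w j u * (q u ^ j * ((j:ℝ) * ((q u)⁻¹ * q1 u)))) * Real.log (q u)
          + w j u * q u ^ j * ((q u)⁻¹ * q1 u)) u := by
    intro j hj u hu
    exact ((hdo j hj u hu).mul (hpow j u hu)).mul (hlog u hu)
  have hsum : ∀ u ∈ O, HasDerivAt
      (fun t => ∑ j ∈ Finset.range (N+1), w j t * q t ^ j * Real.log (q t))
      (∑ j ∈ Finset.range (N+1),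
        ((deriv (w j) u * q u ^ j + w j u * (q u ^ j * ((j:ℝ) * ((q u)⁻¹ * q1 u)))) * Real.log (q u)
          + w j u * q u ^ j * ((q u)⁻¹ * q1 u))) u :=
    fun u hu => HasDerivAt.fun_sum (fun j hj => hD1 j hj u hu)
  have hEv : deriv (fun t => ∑ j ∈ Finset.range (N+1), w j t * q t ^ j * Real.log (q t))
      =ᶠ[nhds a] (fun u => ∑ j ∈ Finset.range (N+1),
        ((deriv (w j) u * q u ^ j + w j u * (q u ^ j * ((j:ℝ) * ((q u)⁻¹ * q1 u)))) * Real.log (q u)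
          + w j u * q u ^ j * ((q u)⁻¹ * q1 u))) := by
    filter_upwards [hO.mem_nhds ha] with u hu
    exact (hsum u hu).deriv
  rw [hEv.deriv_eq]
  have hne : q a ≠ 0 := (hpos a ha).ne'
  have hinv : HasDerivAt (fun t => (q t)⁻¹) (-(q1 a) / q a ^ 2) a := (hq a).inv hne
  refine HasDerivAt.deriv (HasDerivAt.fun_sum fun j hj => ?_)
  have h := ((((hd2 j hj).mul (hpow j a ha)).add
      ((hdo j hj a ha).mul ((hpow j a ha).mul ((hinv.mul hq1).const_mul (j:ℝ))))).mul
      (hlog a ha)).add (((hdo j hj a ha).mul (hpow j a ha)).mul (hinv.mul hq1))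
  convert h using 1
  · funext u; simp only [Pi.add_apply, Pi.mul_apply]
  simp only [K1, K2, K3, K4, Pi.add_apply, Pi.mul_apply]
  field_simp
  ring
lemma final_algebra (s L mr m2 : ℝ) (hs : s ≠ 0) (B C A : ℕ → ℝ) (N : ℕ) :
    (∑ j ∈ Finset.range (N+1),
      (K1 s L j * B j + K2 s L j * C j + A j * (K3 s L j * (2*s) + K4 s L j * (mr+2))))
    + m2 * ∑ j ∈ Finset.range (N+1), A j * s ^ j * L
    = (2 * C 0 + ((mr+2) - 2) * A 0) * s⁻¹
    + (∑ j ∈ Finset.range N,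
        ((B j + m2 * A j) + 2*((j:ℝ)+1) * C (j+1) + ((j:ℝ)+1)*((mr+2)+2*(j:ℝ)) * A (j+1))
          * s ^ j * L)
    + (B N + m2 * A N) * s ^ N * L
    + (∑ j ∈ Finset.Icc 1 N, (2 * C j + (4*(j:ℝ) + (mr+2) - 2) * A j) * s ^ (j-1)) := by
  induction N with
  | zero =>
    simp only [Finset.range_one, Finset.sum_singleton, Finset.range_zero, Finset.sum_empty,
      Finset.Icc_self, zero_add, add_zero, K1, K2, K3, K4]
    simp only [Nat.cast_zero, pow_zero, Finset.Icc_eq_empty_of_lt (by norm_num : (1:ℕ) > 0),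
      Finset.sum_empty]
    field_simp
    ring
  | succ n ih =>
    rw [Finset.sum_range_succ, Finset.sum_range_succ (f := fun j => A j * s ^ j * L),
      Finset.sum_range_succ (f := fun j =>
        ((B j + m2 * A j) + 2*((j:ℝ)+1) * C (j+1) + ((j:ℝ)+1)*((mr+2)+2*(j:ℝ)) * A (j+1))
          * s ^ j * L),
      Finset.sum_Icc_succ_top (by omega : 1 ≤ n + 1)]
    have key : (K1 s L (n+1) * B (n+1) + K2 s L (n+1) * C (n+1)
          + A (n+1) * (K3 s L (n+1) * (2*s) + K4 s L (n+1) * (mr+2)))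
        + m2 * (A (n+1) * s ^ (n+1) * L)
        = ((B n + m2 * A n) + 2*((n:ℝ)+1) * C (n+1) + ((n:ℝ)+1)*((mr+2)+2*(n:ℝ)) * A (n+1))
            * s ^ n * L
          + (B (n+1) + m2 * A (n+1)) * s ^ (n+1) * L
          - (B n + m2 * A n) * s ^ n * L
          + (2 * C (n+1) + (4*((n:ℝ)+1) + (mr+2) - 2) * A (n+1)) * s ^ ((n+1)-1) := by
      simp only [K1, K2, K3, K4, Nat.add_sub_cancel]
      push_cast
      field_simp
      ring
    push_cast at key ⊢
    linear_combination ih + key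
lemma combine_slices {n : ℕ} (k1 k2 k3 k4 vj : ℝ)
    (Wt2 Wz2 : ℝ) (Wx2 : Fin n → ℝ) (Wt1 Wz1 : ℝ) (Wx1 : Fin n → ℝ)
    (Dt Dz : ℝ) (Dx : Fin n → ℝ) :
    (k1 * Wt2 + k2 * (Wt1 * Dt) + vj * (k3 * Dt^2 + k4 * 1))
    - (∑ i, (k1 * Wx2 i + k2 * (Wx1 i * Dx i) + vj * (k3 * (Dx i)^2 + k4 * (-1))))
    - (k1 * Wz2 + k2 * (Wz1 * Dz) + vj * (k3 * Dz^2 + k4 * (-1)))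
    = k1 * (Wt2 - (∑ i, Wx2 i) - Wz2)
      + k2 * (Dt * Wt1 - (∑ i, Dx i * Wx1 i) - Dz * Wz1)
      + vj * (k3 * (Dt^2 - (∑ i, (Dx i)^2) - Dz^2) + k4 * ((n:ℝ) + 2)) := by
  have h1 : ∑ i, (k1 * Wx2 i + k2 * (Wx1 i * Dx i) + vj * (k3 * (Dx i)^2 + k4 * (-1)))
      = k1 * (∑ i, Wx2 i) + k2 * (∑ i, Dx i * Wx1 i)
        + (vj * (k3 * (∑ i, (Dx i)^2)) - (n:ℝ) * (vj * k4)) := by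
    rw [show (∑ i, (k1 * Wx2 i + k2 * (Wx1 i * Dx i) + vj * (k3 * (Dx i)^2 + k4 * (-1))))
        = ∑ i, (k1 * Wx2 i + k2 * (Dx i * Wx1 i) + (vj * (k3 * (Dx i)^2) - vj * k4)) from
      Finset.sum_congr rfl fun i _ => by ring]
    simp only [Finset.sum_add_distrib, Finset.sum_sub_distrib, ← Finset.mul_sum,
      Finset.sum_const, Finset.card_univ, Fintype.card_fin, nsmul_eq_mul]
    ring
  rw [h1]; ring
end Aux

/-- Hadamard recursion relations for the V-coefficients in dimension d = m + 2 ≥ 2: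
for smooth v_0, …, v_N on an open U ⊆ ℝ^d and x ∈ U with σ(x,x′) > 0,
(□+m²)(Σ_{j=0}^{N} v_j σ^j ln σ)
  = [2σ^μ∂_μv_0 + (d−2)v_0]σ^{−1}
  + Σ_{j=0}^{N−1} [(□+m²)v_j + 2(j+1)σ^μ∂_μv_{j+1} + (j+1)(d+2j)v_{j+1}] σ^j ln σ
  + ((□+m²)v_N) σ^N ln σ
  + Σ_{j=1}^{N} [2σ^μ∂_μv_j + (4j+d−2)v_j] σ^{j−1}. -/
theorem hadamard_recursion_V (m : ℕ) (x' : Pt m) (m2 : ℝ) (N : ℕ)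
    (U : Set (Pt m)) (hU : IsOpen U) (v : ℕ → Pt m → ℝ)
    (hv : ∀ j ≤ N, ContDiffOn ℝ (⊤ : ℕ∞) (v j) U) (x : Pt m) (hx : x ∈ U)
    (hσ : 0 < synge x' x) :
    box (fun y => ∑ j ∈ Finset.range (N + 1),
          v j y * synge x' y ^ j * Real.log (synge x' y)) x
      + m2 * ∑ j ∈ Finset.range (N + 1),
          v j x * synge x' x ^ j * Real.log (synge x' x) =
    (2 * contr (synge x') (v 0) x + (((m : ℝ) + 2) - 2) * v 0 x) * (synge x' x)⁻¹
    + (∑ j ∈ Finset.range N,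
        ((box (v j) x + m2 * v j x)
          + 2 * ((j : ℝ) + 1) * contr (synge x') (v (j + 1)) x
          + ((j : ℝ) + 1) * (((m : ℝ) + 2) + 2 * (j : ℝ)) * v (j + 1) x)
          * synge x' x ^ j * Real.log (synge x' x))
    + (box (v N) x + m2 * v N x) * synge x' x ^ N * Real.log (synge x' x)
    + (∑ j ∈ Finset.Icc 1 N,
        (2 * contr (synge x') (v j) x + (4 * (j : ℝ) + ((m : ℝ) + 2) - 2) * v j x)
          * synge x' x ^ (j - 1)) := by
  classical
  have hne : synge x' x ≠ 0 := ne_of_gt hσ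
  have hV : IsOpen (U ∩ synge x' ⁻¹' Set.Ioi 0) :=
    hU.inter (isOpen_Ioi.preimage (cont_synge x'))
  have hxV : x ∈ U ∩ synge x' ⁻¹' Set.Ioi 0 := ⟨hx, hσ⟩
  have hvj : ∀ j ∈ Finset.range (N+1), ContDiffOn ℝ (⊤ : ℕ∞) (v j) U :=
    fun j hj => hv j (Nat.lt_succ_iff.mp (Finset.mem_range.mp hj))
  have hxeq : ∀ i : Fin m, ((x.1, Function.update x.2.1 i (x.2.1 i), x.2.2) : Pt m) = x := by
    intro i; rw [Function.update_eq_self]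
  -- t slice
  have Et : pdt (pdt (fun y => ∑ j ∈ Finset.range (N + 1), v j y * synge x' y ^ j * Real.log (synge x' y))) x
      = ∑ j ∈ Finset.range (N+1), (K1 (synge x' x) (Real.log (synge x' x)) j * pdt (pdt (v j)) x + K2 (synge x' x) (Real.log (synge x' x)) j * (pdt (v j) x * (x.1 - x'.1)) + v j x * (K3 (synge x' x) (Real.log (synge x' x)) j * (x.1 - x'.1)^2 + K4 (synge x' x) (Real.log (synge x' x)) j * 1)) := by
    have hat : x.1 ∈ (fun u : ℝ => ((u, x.2.1, x.2.2) : Pt m)) ⁻¹' (U ∩ synge x' ⁻¹' Set.Ioi 0) := hxV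
    exact master (hV.preimage (contDiff_slice_t x.2.1 x.2.2).continuous) hat N
      (fun j u => v j (u, x.2.1, x.2.2))
      (fun j hj => ContDiffOn.comp (hvj j hj) (contDiff_slice_t x.2.1 x.2.2).contDiffOn
        (fun u hu => hu.1))
      (fun u => synge x' (u, x.2.1, x.2.2)) (fun u => u - x'.1) 1
      (fun u => hq_t x' x.2.1 x.2.2 u) ((hasDerivAt_id x.1).sub_const x'.1)
      (fun u hu => hu.2)
  -- z slice
  have Ez : pdz (pdz (fun y => ∑ j ∈ Finset.range (N + 1), v j y * synge x' y ^ j * Real.log (synge x' y))) x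
      = ∑ j ∈ Finset.range (N+1), (K1 (synge x' x) (Real.log (synge x' x)) j * pdz (pdz (v j)) x + K2 (synge x' x) (Real.log (synge x' x)) j * (pdz (v j) x * (-(x.2.2 - x'.2.2))) + v j x * (K3 (synge x' x) (Real.log (synge x' x)) j * (-(x.2.2 - x'.2.2))^2 + K4 (synge x' x) (Real.log (synge x' x)) j * (-1))) := by
    have haz : x.2.2 ∈ (fun u : ℝ => ((x.1, x.2.1, u) : Pt m)) ⁻¹' (U ∩ synge x' ⁻¹' Set.Ioi 0) := hxV
    exact master (hV.preimage (contDiff_slice_z x.1 x.2.1).continuous) haz N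
      (fun j u => v j (x.1, x.2.1, u))
      (fun j hj => ContDiffOn.comp (hvj j hj) (contDiff_slice_z x.1 x.2.1).contDiffOn
        (fun u hu => hu.1))
      (fun u => synge x' (x.1, x.2.1, u)) (fun u => -(u - x'.2.2)) (-1)
      (fun u => hq_z x' x.1 x.2.1 u) (((hasDerivAt_id x.2.2).sub_const x'.2.2).neg)
      (fun u hu => hu.2)
  -- x slices
  have Ex : ∀ i : Fin m, pdx i (pdx i (fun y => ∑ j ∈ Finset.range (N + 1), v j y * synge x' y ^ j * Real.log (synge x' y))) x
      = ∑ j ∈ Finset.range (N+1), (K1 (synge x' x) (Real.log (synge x' x)) j * deriv (deriv (fun u => v j (x.1, Function.update x.2.1 i u, x.2.2))) (x.2.1 i) + K2 (synge x' x) (Real.log (synge x' x)) j * (pdx i (v j) x * (-(x.2.1 i - x'.2.1 i))) + v j x * (K3 (synge x' x) (Real.log (synge x' x)) j * (-(x.2.1 i - x'.2.1 i))^2 + K4 (synge x' x) (Real.log (synge x' x)) j * (-1))) := by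
    intro i
    have hai : x.2.1 i ∈ (fun u : ℝ => ((x.1, Function.update x.2.1 i u, x.2.2) : Pt m)) ⁻¹'
        (U ∩ synge x' ⁻¹' Set.Ioi 0) := by
      simp only [Set.mem_preimage]
      rw [hxeq i]; exact hxV
    have E := master (hV.preimage (contDiff_slice_x x.1 x.2.1 x.2.2 i).continuous) hai N
      (fun j u => v j (x.1, Function.update x.2.1 i u, x.2.2))
      (fun j hj => ContDiffOn.comp (hvj j hj) (contDiff_slice_x x.1 x.2.1 x.2.2 i).contDiffOn
        (fun u hu => hu.1))
      (fun u => synge x' (x.1, Function.update x.2.1 i u, x.2.2))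
      (fun u => -(u - x'.2.1 i)) (-1)
      (fun u => hq_x x' x.1 x.2.1 x.2.2 i u)
      (((hasDerivAt_id (x.2.1 i)).sub_const (x'.2.1 i)).neg)
      (fun u hu => hu.2)
    beta_reduce at E
    rw [hxeq i] at E
    rw [pdx_pdx]
    exact E
  have hsum : (∑ i : Fin m, pdx i (pdx i (fun y => ∑ j ∈ Finset.range (N + 1), v j y * synge x' y ^ j * Real.log (synge x' y))) x)
      = ∑ j ∈ Finset.range (N+1), ∑ i : Fin m, (K1 (synge x' x) (Real.log (synge x' x)) j * deriv (deriv (fun u => v j (x.1, Function.update x.2.1 i u, x.2.2))) (x.2.1 i) + K2 (synge x' x) (Real.log (synge x' x)) j * (pdx i (v j) x * (-(x.2.1 i - x'.2.1 i))) + v j x * (K3 (synge x' x) (Real.log (synge x' x)) j * (-(x.2.1 i - x'.2.1 i))^2 + K4 (synge x' x) (Real.log (synge x' x)) j * (-1))) := by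
    rw [Finset.sum_congr rfl (fun i _ => Ex i)]
    exact Finset.sum_comm
  have hper : ∀ j ∈ Finset.range (N+1),
      (K1 (synge x' x) (Real.log (synge x' x)) j * pdt (pdt (v j)) x + K2 (synge x' x) (Real.log (synge x' x)) j * (pdt (v j) x * (x.1 - x'.1)) + v j x * (K3 (synge x' x) (Real.log (synge x' x)) j * (x.1 - x'.1)^2 + K4 (synge x' x) (Real.log (synge x' x)) j * 1)) - (∑ i : Fin m, (K1 (synge x' x) (Real.log (synge x' x)) j * deriv (deriv (fun u => v j (x.1, Function.update x.2.1 i u, x.2.2))) (x.2.1 i) + K2 (synge x' x) (Real.log (synge x' x)) j * (pdx i (v j) x * (-(x.2.1 i - x'.2.1 i))) + v j x * (K3 (synge x' x) (Real.log (synge x' x)) j * (-(x.2.1 i - x'.2.1 i))^2 + K4 (synge x' x) (Real.log (synge x' x)) j * (-1)))) - (K1 (synge x' x) (Real.log (synge x' x)) j * pdz (pdz (v j)) x + K2 (synge x' x) (Real.log (synge x' x)) j * (pdz (v j) x * (-(x.2.2 - x'.2.2))) + v j x * (K3 (synge x' x) (Real.log (synge x' x)) j * (-(x.2.2 - x'.2.2))^2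 + K4 (synge x' x) (Real.log (synge x' x)) j * (-1)))
      = K1 (synge x' x) (Real.log (synge x' x)) j * box (v j) x + K2 (synge x' x) (Real.log (synge x' x)) j * contr (synge x') (v j) x
        + v j x * (K3 (synge x' x) (Real.log (synge x' x)) j * (2 * synge x' x) + K4 (synge x' x) (Real.log (synge x' x)) j * ((m:ℝ) + 2)) := by
    intro j hj
    have hcomb := combine_slices (K1 (synge x' x) (Real.log (synge x' x)) j)
      (K2 (synge x' x) (Real.log (synge x' x)) j) (K3 (synge x' x) (Real.log (synge x' x)) j)
      (K4 (synge x' x) (Real.log (synge x' x)) j) (v j x)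
      (pdt (pdt (v j)) x) (pdz (pdz (v j)) x)
      (fun i => deriv (deriv (fun u => v j (x.1, Function.update x.2.1 i u, x.2.2))) (x.2.1 i))
      (pdt (v j) x) (pdz (v j) x) (fun i => pdx i (v j) x)
      (x.1 - x'.1) (-(x.2.2 - x'.2.2)) (fun i => (-(x.2.1 i - x'.2.1 i)))
    beta_reduce at hcomb
    rw [hcomb]
    have h1 : pdt (pdt (v j)) x
        - (∑ i : Fin m, deriv (deriv (fun u => v j (x.1, Function.update x.2.1 i u, x.2.2))) (x.2.1 i))
        - pdz (pdz (v j)) x = box (v j) x := by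
      rw [Finset.sum_congr rfl (fun i (_ : i ∈ Finset.univ) => (pdx_pdx i (v j) x).symm)]
      rfl
    have h2 : (x.1 - x'.1) * pdt (v j) x - (∑ i : Fin m, (-(x.2.1 i - x'.2.1 i)) * pdx i (v j) x)
        - (-(x.2.2 - x'.2.2)) * pdz (v j) x = contr (synge x') (v j) x := by
      simp only [contr, pdt_synge, pdx_synge, pdz_synge]
    have h3 : (x.1 - x'.1)^2 - (∑ i : Fin m, (-(x.2.1 i - x'.2.1 i))^2) - (-(x.2.2 - x'.2.2))^2 = 2 * synge x' x := by
      simp only [neg_sq, synge]; ring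
    rw [h1, h2, h3]
  rw [show box (fun y => ∑ j ∈ Finset.range (N + 1), v j y * synge x' y ^ j * Real.log (synge x' y)) x = pdt (pdt (fun y => ∑ j ∈ Finset.range (N + 1), v j y * synge x' y ^ j * Real.log (synge x' y))) x - (∑ i : Fin m, pdx i (pdx i (fun y => ∑ j ∈ Finset.range (N + 1), v j y * synge x' y ^ j * Real.log (synge x' y))) x)
      - pdz (pdz (fun y => ∑ j ∈ Finset.range (N + 1), v j y * synge x' y ^ j * Real.log (synge x' y))) x from rfl]
  rw [Et, hsum, Ez, ← Finset.sum_sub_distrib, ← Finset.sum_sub_distrib,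
    Finset.sum_congr rfl hper]
  exact final_algebra (synge x' x) (Real.log (synge x' x)) (m:ℝ) m2 hne (fun j => box (v j) x)
    (fun j => contr (synge x') (v j) x) (fun j => v j x) N


end
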